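/- arXiv:2011.06563 — 2 statements merged into one kernel-verified Lean document; each statement's English description precedes it below -/
import Mathlib

section
/- Let K be a field, let V and W be finite-dimensional K-vector spaces, and let f : V → V and g : W → W be K-linear endomorphisms. Let α, β ∈ K with β ≠ 0. Suppose there exists a vector v ∈ V with (f − α)²(v) = 0 but (f − α)(v) ≠ 0 (i.e. the eigenvalue α of f is not semisimple), and suppose β is an eigenvalue of g. Then the eigenvalue α·β of the endomorphism f ⊗ g of V ⊗[K] W is not semisimple: there exists a vector u ∈ V ⊗[K] W with ((f ⊗ g) − αβ)²(u) = 0 but ((f ⊗ g) − αβ)(u) ≠ 0. (This is the key step in the paper's Lemma deducing semisimplicity of Frobenius on H*(X) from the semisimplicity of the eigenvalue 1 on H*(X×X).) -/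
/-!
If `g w = β • w` with `w ≠ 0`, then on the line `V ⊗ w` the operator `f ⊗ g - αβ` acts as
`β • (f - α)`. Hence `v ⊗ w` is killed by `(f ⊗ g - αβ)²` but not by `f ⊗ g - αβ`, since
`β ≠ 0` and a pure tensor of nonzero vectors over a field is nonzero.
-/

open TensorProduct

theorem TensorProduct.tmul_ne_zero {R V W : Type*} [CommRing R] [NoZeroDivisors R]
    [AddCommGroup V] [Module R V] [Module.Projective R V]
    [AddCommGroup W] [Module R W] [Module.Projective R W]
    {x : V} {y : W} (hx : x ≠ 0) (hy : y ≠ 0) : x ⊗ₜ[R] y ≠ 0 := by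
  obtain ⟨φ, hφ⟩ := Module.Projective.exists_dual_ne_zero R hx
  obtain ⟨ψ, hψ⟩ := Module.Projective.exists_dual_ne_zero R hy
  intro h
  have := congrArg (dualDistrib R V W (φ ⊗ₜ ψ)) h
  rw [dualDistrib_apply, map_zero] at this
  exact mul_ne_zero hφ hψ this

section

variable {R V W : Type*} [CommRing R] [AddCommGroup V] [Module R V] [AddCommGroup W] [Module R W]
  {f : Module.End R V} {g : Module.End R W} {β : R} {w : W}

theorem TensorProduct.map_sub_smul_one_tmul_of_apply_eq_smul (hw : g w = β • w) (α : R) (x : V) :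
    (map f g - (α * β) • 1 : Module.End R (V ⊗[R] W)) (x ⊗ₜ w) = β • ((f - α • 1) x ⊗ₜ w) := by
  simp only [LinearMap.sub_apply, LinearMap.smul_apply, Module.End.one_apply, map_tmul, hw,
    tmul_smul, sub_tmul, smul_tmul', smul_sub, smul_smul, mul_comm]

theorem TensorProduct.map_sub_smul_one_pow_tmul_of_apply_eq_smul (hw : g w = β • w) (α : R)
    (n : ℕ) (x : V) :
    ((map f g - (α * β) • 1 : Module.End R (V ⊗[R] W)) ^ n) (x ⊗ₜ w) =
      β ^ n • (((f - α • 1) ^ n) x ⊗ₜ w) := by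
  induction n with
  | zero => simp
  | succ n ih =>
    rw [pow_succ', Module.End.mul_apply, ih, map_smul,
      map_sub_smul_one_tmul_of_apply_eq_smul hw, smul_smul, ← pow_succ, ← Module.End.mul_apply,
      ← pow_succ']

end

theorem tensorProduct_map_eigenvalue_not_semisimple_general
    {K V W : Type*} [Field K]
    [AddCommGroup V] [Module K V] [AddCommGroup W] [Module K W]
    (f : Module.End K V) (g : Module.End K W) (α β : K) (hβ0 : β ≠ 0)
    (hv : ∃ v : V, ((f - α • (1 : Module.End K V)) ^ 2) v = 0 ∧
      (f - α • (1 : Module.End K V)) v ≠ 0)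
    (hβ : g.HasEigenvalue β) :
    ∃ u : V ⊗[K] W,
      (((TensorProduct.map f g : Module.End K (V ⊗[K] W))
          - (α * β) • (1 : Module.End K (V ⊗[K] W))) ^ 2) u = 0 ∧
      ((TensorProduct.map f g : Module.End K (V ⊗[K] W))
          - (α * β) • (1 : Module.End K (V ⊗[K] W))) u ≠ 0 := by
  obtain ⟨v, hv2, hv1⟩ := hv
  obtain ⟨w, hw, hw0⟩ := hβ.exists_hasEigenvector
  have hgw : g w = β • w := Module.End.mem_eigenspace_iff.mp hw
  refine ⟨v ⊗ₜ w, ?_, ?_⟩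
  · rw [map_sub_smul_one_pow_tmul_of_apply_eq_smul hgw, hv2, zero_tmul, smul_zero]
  · rw [map_sub_smul_one_tmul_of_apply_eq_smul hgw]
    exact smul_ne_zero hβ0 (tmul_ne_zero hv1 hw0)

/-- If the eigenvalue `α` of `f` is not semisimple (there is `v` with
`(f - α)^2 v = 0` but `(f - α) v ≠ 0`), `β ≠ 0` is an eigenvalue of `g`,
then the eigenvalue `α * β` of `f ⊗ g` is not semisimple: there is `u` with
`((f ⊗ g) - αβ)^2 u = 0` but `((f ⊗ g) - αβ) u ≠ 0`. -/
theorem tensorProduct_map_eigenvalue_not_semisimple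
    {K V W : Type*} [Field K]
    [AddCommGroup V] [Module K V] [AddCommGroup W] [Module K W]
    [FiniteDimensional K V] [FiniteDimensional K W]
    (f : Module.End K V) (g : Module.End K W) (α β : K) (hβ0 : β ≠ 0)
    (hv : ∃ v : V, ((f - α • (1 : Module.End K V)) ^ 2) v = 0 ∧
      (f - α • (1 : Module.End K V)) v ≠ 0)
    (hβ : g.HasEigenvalue β) :
    ∃ u : V ⊗[K] W,
      (((TensorProduct.map f g : Module.End K (V ⊗[K] W))
          - (α * β) • (1 : Module.End K (V ⊗[K] W))) ^ 2) u = 0 ∧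
      ((TensorProduct.map f g : Module.End K (V ⊗[K] W))
          - (α * β) • (1 : Module.End K (V ⊗[K] W))) u ≠ 0 :=
  tensorProduct_map_eigenvalue_not_semisimple_general f g α β hβ0 hv hβ
end

section
/- Let K be an algebraically closed field, let V be a nonzero finite-dimensional K-vector space, and let f : V → V be a bijective K-linear endomorphism. Assume: (i) for every eigenvalue α of f, the inverse α⁻¹ is also an eigenvalue of f; and (ii) the eigenvalue 1 of the endomorphism f ⊗ f of V ⊗[K] V is semisimple, in the sense that the generalized eigenspace of f ⊗ f for the eigenvalue 1 equals the eigenspace of f ⊗ f for the eigenvalue 1. Then f is semisimple: for every μ ∈ K, the generalized eigenspace of f for μ equals the eigenspace of f for μ (equivalently, f is diagonalizable). (This is the linear-algebra content of the paper's Lemma: for a variety X over a finite field, the conjecture S(X×X,ℓ) — semisimplicity of the eigenvalue 1 of Frobenius on the cohomology of X×X — together with the Künneth formula and Poincaré duality, implies that Frobenius acts semisimply on the ℓ-adic étale cohomology of X.) -/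
/-!
If `f` is not semisimple at `μ`, there are `v ≠ 0` and `w` with `f v = μ v` and
`f w = μ w + v`. Bijectivity gives `μ ≠ 0`, so `μ⁻¹` has an eigenvector `u`, and then `f ⊗ f`
fixes `v ⊗ u ≠ 0` and sends `w ⊗ u` to `w ⊗ u + μ⁻¹ (v ⊗ u)`: a Jordan block of size two for
the eigenvalue `1` of `f ⊗ f`.
-/

open TensorProduct

theorem TensorProduct.tmul_ne_zero_s3 {R M N : Type*} [CommRing R] [NoZeroDivisors R]
    [AddCommGroup M] [Module R M] [Module.Projective R M]
    [AddCommGroup N] [Module R N] [Module.Projective R N]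
    {m : M} {n : N} (hm : m ≠ 0) (hn : n ≠ 0) : m ⊗ₜ[R] n ≠ 0 := by
  obtain ⟨φ, hφ⟩ := Module.Projective.exists_dual_ne_zero R hm
  obtain ⟨ψ, hψ⟩ := Module.Projective.exists_dual_ne_zero R hn
  intro h
  have hpair := congrArg (dualDistrib R M N (φ ⊗ₜ ψ)) h
  rw [dualDistrib_apply, map_zero] at hpair
  exact mul_ne_zero hφ hψ hpair

namespace Module.End

theorem genEigenspace_two {R M : Type*} [CommRing R] [AddCommGroup M] [Module R M]
    (f : End R M) (μ : R) : f.genEigenspace μ 2 = LinearMap.ker ((f - μ • 1) ^ 2) := by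
  simpa using genEigenspace_nat (f := f) (μ := μ) (k := 2)

variable {K V W : Type*} [Field K] [AddCommGroup V] [Module K V] [AddCommGroup W] [Module K W]

theorem maxGenEigenspace_eq_eigenspace_of_genEigenspace_two_le {f : End K V} {μ : K}
    (h : f.genEigenspace μ 2 ≤ f.eigenspace μ) : f.maxGenEigenspace μ = f.eigenspace μ := by
  rw [genEigenspace_two, eigenspace, genEigenspace_one] at h
  have hker : LinearMap.ker (f - μ • 1) = LinearMap.ker ((f - μ • 1) ^ Nat.succ 1) :=
    le_antisymm (LinearMap.ker_le_ker_comp _ _) h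
  rw [← iSup_genEigenspace_eq]
  refine le_antisymm (iSup_le fun k ↦ ?_) (le_iSup_of_le 1 le_rfl)
  rcases k with _ | k
  · simp
  · rw [genEigenspace_nat, add_comm, ← ker_pow_constant hker k, pow_one, eigenspace,
      genEigenspace_one]

theorem exists_hasEigenvector_of_maxGenEigenspace_ne_eigenspace {f : End K V} {μ : K}
    (h : f.maxGenEigenspace μ ≠ f.eigenspace μ) :
    ∃ v w, f.HasEigenvector μ v ∧ f w = μ • w + v := by
  obtain ⟨w, hw2, hw1⟩ := SetLike.not_le_iff_exists.mp
    (mt maxGenEigenspace_eq_eigenspace_of_genEigenspace_two_le h)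
  refine ⟨(f - μ • 1) w, w, ⟨?_, ?_⟩, by simp⟩
  · rw [genEigenspace_two] at hw2
    simpa [eigenspace, genEigenspace_one, pow_two] using hw2
  · simpa [sub_eq_zero] using hw1

theorem maxGenEigenspace_map_ne_eigenspace {f : End K V} {g : End K W} {μ ν : K}
    {v w : V} {u : W}
    (hv : f.HasEigenvector μ v) (hw : f w = μ • w + v) (hu : g.HasEigenvector ν u) (hν : ν ≠ 0) :
    maxGenEigenspace (map f g) (μ * ν) ≠ eigenspace (map f g) (μ * ν) := by
  have hvu : map f g (v ⊗ₜ u) = (μ * ν) • v ⊗ₜ u := by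
    rw [map_tmul, hv.apply_eq_smul, hu.apply_eq_smul, smul_tmul_smul]
  have hwu : map f g (w ⊗ₜ u) = (μ * ν) • w ⊗ₜ u + ν • v ⊗ₜ u := by
    rw [map_tmul, hw, hu.apply_eq_smul, add_tmul, smul_tmul_smul, tmul_smul]
  intro h
  have hgen : w ⊗ₜ u ∈ maxGenEigenspace (map f g) (μ * ν) := by
    refine genEigenspace_le_maximal _ _ 2 (mem_genEigenspace_nat.mpr ?_)
    simp [pow_two, hvu, hwu]
  rw [h, mem_eigenspace_iff, hwu, add_eq_left, smul_eq_zero] at hgen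
  exact hgen.elim hν (tmul_ne_zero_s3 hv.2 hu.2)

end Module.End

theorem semisimple_of_tensor_self_eigenvalue_one_semisimple_general
    {K V : Type*} [Field K]
    [AddCommGroup V] [Module K V]
    (f : Module.End K V) (hf : Function.Bijective f)
    (hinv : ∀ α : K, f.HasEigenvalue α → f.HasEigenvalue α⁻¹)
    (hss : Module.End.maxGenEigenspace
        (TensorProduct.map f f : Module.End K (V ⊗[K] V)) 1
      = Module.End.eigenspace
        (TensorProduct.map f f : Module.End K (V ⊗[K] V)) 1) :
    ∀ μ : K, f.maxGenEigenspace μ = f.eigenspace μ := by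
  intro μ
  by_contra hne
  obtain ⟨v, w, hv, hw⟩ := Module.End.exists_hasEigenvector_of_maxGenEigenspace_ne_eigenspace hne
  have hμ : μ ≠ 0 := by
    rintro rfl
    exact hv.2 (hf.injective (by rw [hv.apply_eq_smul, zero_smul, map_zero]))
  obtain ⟨u, hu⟩ := (hinv μ (Module.End.hasEigenvalue_of_hasEigenvector hv)).exists_hasEigenvector
  apply Module.End.maxGenEigenspace_map_ne_eigenspace hv hw hu (inv_ne_zero hμ)
  rwa [mul_inv_cancel₀ hμ]

/-- Let `K` be algebraically closed, `V` a nonzero finite-dimensional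
`K`-vector space, and `f : V → V` a bijective `K`-linear endomorphism such
that (i) for every eigenvalue `α` of `f`, `α⁻¹` is also an eigenvalue of `f`,
and (ii) the generalized eigenspace of `f ⊗ f` for the eigenvalue `1` equals
its eigenspace for `1`. Then `f` is semisimple: for every `μ : K` the
generalized eigenspace of `f` for `μ` equals the eigenspace of `f` for `μ`. -/
theorem semisimple_of_tensor_self_eigenvalue_one_semisimple
    {K V : Type*} [Field K] [IsAlgClosed K]
    [AddCommGroup V] [Module K V] [FiniteDimensional K V] [Nontrivial V]
    (f : Module.End K V) (hf : Function.Bijective f)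
    (hinv : ∀ α : K, f.HasEigenvalue α → f.HasEigenvalue α⁻¹)
    (hss : Module.End.maxGenEigenspace
        (TensorProduct.map f f : Module.End K (V ⊗[K] V)) 1
      = Module.End.eigenspace
        (TensorProduct.map f f : Module.End K (V ⊗[K] V)) 1) :
    ∀ μ : K, f.maxGenEigenspace μ = f.eigenspace μ :=
  semisimple_of_tensor_self_eigenvalue_one_semisimple_general f hf hinv hss
end
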